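/- The image of an abstract observable function f : D(L) → ℝ is a compact subset of ℝ. -/

import Mathlib

/-!
A sequence `y` in the image has its limit superior in the image: writing `y n = f (J n)`, the
dual ideal `K = liminf J = {x | x ∈ J n eventually}` satisfies `f K = limsup y`. Indeed `K`
contains every tail intersection `⋂_{m ≥ n} J m`, whose value is `⨆_{m ≥ n} y m`, which gives
`f K ≤ limsup y`; conversely, upper semicontinuity at `K` yields `P ∈ K`, hence `P` in some tail
intersection, with that tail's value below `f K + ε`. Closedness and boundedness from below follow,
and `f J ≤ f {⊤}` bounds the image from above.
-/

open Filter Topology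

def IsDualIdeal {L : Type} [Lattice L] [OrderBot L] (J : Set L) : Prop :=
  J.Nonempty ∧ ⊥ ∉ J ∧ (∀ a ∈ J, ∀ b ∈ J, a ⊓ b ∈ J) ∧ (∀ a ∈ J, ∀ b : L, a ≤ b → b ∈ J)

section Limsup

variable {α β : Type*}

theorem IsGLB.eq_of_tendsto [ConditionallyCompleteLinearOrder β] [TopologicalSpace β]
    [OrderTopology β] {l : Filter α} [l.NeBot] {y : α → β} {a x : β}
    (hx : IsGLB {c | ∀ᶠ n in l, y n ≤ c} x) (hy : Tendsto y l (𝓝 a)) : x = a := by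
  obtain ⟨b, hb⟩ := hy.isBoundedUnder_le
  rw [← hx.csInf_eq ⟨b, hb⟩, ← limsup_eq]
  exact hy.limsup_eq

theorem not_isGLB_of_tendsto_atBot [Preorder β] [NoMinOrder β] {l : Filter α} {y : α → β} {x : β}
    (hy : Tendsto y l atBot) : ¬IsGLB {c | ∀ᶠ n in l, y n ≤ c} x := fun hx => by
  obtain ⟨b, hb⟩ := exists_lt x
  exact (hx.1 (tendsto_atBot.1 hy b)).not_gt hb

theorem isCompact_of_bddAbove_of_forall_exists_isGLB {S : Set ℝ} (hS : BddAbove S)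
    (hlimsup : ∀ y : ℕ → ℝ, (∀ n, y n ∈ S) → ∃ x ∈ S, IsGLB {c | ∀ᶠ n in atTop, y n ≤ c} x) :
    IsCompact S := by
  rw [Metric.isCompact_iff_isClosed_bounded, isBounded_iff_bddBelow_bddAbove]
  refine ⟨IsSeqClosed.isClosed fun y a hyS hya => ?_, ?_, hS⟩
  · obtain ⟨x, hxS, hx⟩ := hlimsup y hyS
    rwa [← hx.eq_of_tendsto hya]
  · by_contra hunbdd
    choose y hyS hy using fun n : ℕ => not_bddBelow_iff.1 hunbdd (-n)
    have hy_bot : Tendsto y atTop atBot :=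
      tendsto_atBot_mono (fun n => (hy n).le)
        (tendsto_neg_atTop_atBot.comp tendsto_natCast_atTop_atTop)
    obtain ⟨x, -, hx⟩ := hlimsup y hyS
    exact not_isGLB_of_tendsto_atBot hy_bot hx

end Limsup

section DualIdeal

variable {L : Type} [Lattice L] [OrderBot L] [OrderTop L]

theorem IsDualIdeal.top_mem {J : Set L} (hJ : IsDualIdeal J) : ⊤ ∈ J := by
  obtain ⟨⟨a, ha⟩, -, -, hup⟩ := hJ
  exact hup a ha ⊤ le_top

theorem IsDualIdeal.bot_ne_top {J : Set L} (hJ : IsDualIdeal J) : (⊥ : L) ≠ ⊤ :=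
  fun h => hJ.2.1 (h ▸ hJ.top_mem)

theorem isDualIdeal_singleton_top (h : (⊥ : L) ≠ ⊤) : IsDualIdeal ({⊤} : Set L) := by
  refine ⟨Set.singleton_nonempty _, h, ?_, ?_⟩
  · rintro a rfl b rfl
    exact inf_idem _
  · rintro a rfl b hab
    exact top_le_iff.1 hab

theorem isDualIdeal_setOf_eventually_mem {ι : Type*} {F : Filter ι} [F.NeBot] {J : ι → Set L}
    (hJ : ∀ i, IsDualIdeal (J i)) : IsDualIdeal {x | ∀ᶠ i in F, x ∈ J i} := by
  refine ⟨⟨⊤, .of_forall fun i => (hJ i).top_mem⟩, fun hbot => ?_, ?_, ?_⟩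
  · obtain ⟨i, hi⟩ := hbot.exists
    exact (hJ i).2.1 hi
  · intro a ha b hb
    filter_upwards [ha, hb] with i hai hbi using (hJ i).2.2.1 a hai b hbi
  · intro a ha b hab
    filter_upwards [ha] with i hai using (hJ i).2.2.2 a hai b hab

theorem IsDualIdeal.iInter {ι : Type*} [Nonempty ι] {J : ι → Set L}
    (hJ : ∀ i, IsDualIdeal (J i)) : IsDualIdeal (⋂ i, J i) := by
  simpa only [eventually_top, Set.ofPred_forall, Set.ofPred_mem_eq] using
    isDualIdeal_setOf_eventually_mem (F := ⊤) hJ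

end DualIdeal

section Observable

variable {L : Type} [Lattice L] [OrderBot L] {f : Set L → ℝ}

def MapsIInterToISup (f : Set L → ℝ) : Prop :=
  ∀ (ι : Type) [Nonempty ι] (J : ι → Set L), (∀ i, IsDualIdeal (J i)) →
    f (⋂ i, J i) = ⨆ i, f (J i)

/-- Upper semicontinuity for the topology on dual ideals generated by the sets
`D_P = {J | P ∈ J}`. -/
def UpperSemicontinuousOnDualIdeals (f : Set L → ℝ) : Prop :=
  ∀ J₀ : Set L, IsDualIdeal J₀ → ∀ ε : ℝ, 0 < ε →
    ∃ P ∈ J₀, ∀ J : Set L, IsDualIdeal J → P ∈ J → f J < f J₀ + ε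

theorem MapsIInterToISup.map_inter (hf : MapsIInterToISup f) {J J' : Set L}
    (hJ : IsDualIdeal J) (hJ' : IsDualIdeal J') : f (J ∩ J') = max (f J) (f J') := by
  rw [Set.inter_eq_iInter, hf Bool _ (Bool.forall_bool.2 ⟨hJ', hJ⟩), iSup, Bool.range_eq, csSup_pair,
    sup_comm]
  rfl

theorem MapsIInterToISup.le_of_subset (hf : MapsIInterToISup f) {J J' : Set L}
    (hJ : IsDualIdeal J) (hJ' : IsDualIdeal J') (hJJ' : J ⊆ J') : f J' ≤ f J := by
  have h := hf.map_inter hJ hJ'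
  rw [Set.inter_eq_left.2 hJJ'] at h
  exact h ▸ le_max_right _ _

theorem exists_isDualIdeal_isGLB [OrderTop L] (husc : UpperSemicontinuousOnDualIdeals f)
    (hf : MapsIInterToISup f) {J : ℕ → Set L} (hJ : ∀ n, IsDualIdeal (J n)) :
    ∃ K, IsDualIdeal K ∧ IsGLB {c | ∀ᶠ n in atTop, f (J n) ≤ c} (f K) := by
  set tail : ℕ → Set L := fun n => ⋂ m : {m // n ≤ m}, J m
  set K : Set L := {x | ∀ᶠ n in atTop, x ∈ J n}
  have htail : ∀ n, IsDualIdeal (tail n) := fun n => IsDualIdeal.iInter fun m => hJ m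
  have hK : IsDualIdeal K := isDualIdeal_setOf_eventually_mem hJ
  have htail_K : ∀ n, tail n ⊆ K := fun n x hx =>
    eventually_atTop.2 ⟨n, fun m hm => Set.mem_iInter.1 hx ⟨m, hm⟩⟩
  refine ⟨K, hK, fun c hc => ?_, fun b hb => le_of_forall_pos_le_add fun ε hε => ?_⟩
  · obtain ⟨N, hN⟩ := eventually_atTop.1 hc
    calc f K ≤ f (tail N) := hf.le_of_subset (htail N) hK (htail_K N)
      _ = ⨆ m : {m // N ≤ m}, f (J m) := hf _ _ fun m => hJ m
      _ ≤ c := ciSup_le fun m => hN m m.2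
  · obtain ⟨P, hPK, hP⟩ := husc K hK ε hε
    obtain ⟨N, hN⟩ := eventually_atTop.1 hPK
    have hPtail : P ∈ tail N := Set.mem_iInter.2 fun m => hN m m.2
    refine hb (eventually_atTop.2 ⟨N, fun n hn => ?_⟩)
    have htail_J : tail N ⊆ J n := Set.iInter_subset (fun m : {m // N ≤ m} => J m) ⟨n, hn⟩
    calc f (J n) ≤ f (tail N) := hf.le_of_subset (htail N) (hJ n) htail_J
      _ ≤ f K + ε := (hP _ (htail N) hPtail).le

end Observable

/-- The image of an abstract observable function is a compact subset of `ℝ`. -/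
theorem stmt10 {L : Type} [CompleteLattice L] (f : Set L → ℝ)
    (husc : ∀ J₀ : Set L, IsDualIdeal J₀ → ∀ ε : ℝ, 0 < ε →
      ∃ P ∈ J₀, ∀ J : Set L, IsDualIdeal J → P ∈ J → f J < f J₀ + ε)
    (hint : ∀ (ι : Type) [Nonempty ι] (J : ι → Set L), (∀ i, IsDualIdeal (J i)) →
      f (⋂ i, J i) = ⨆ i, f (J i)) :
    IsCompact {y : ℝ | ∃ J : Set L, IsDualIdeal J ∧ f J = y} := by
  have hf : MapsIInterToISup f := hint
  refine isCompact_of_bddAbove_of_forall_exists_isGLB ?_ fun y hy => ?_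
  · refine bddAbove_def.2 ⟨f {⊤}, ?_⟩
    rintro _ ⟨J, hJ, rfl⟩
    exact hf.le_of_subset (isDualIdeal_singleton_top hJ.bot_ne_top) hJ
      (Set.singleton_subset_iff.2 hJ.top_mem)
  · choose J hJ hfJ using hy
    obtain ⟨K, hK, hKglb⟩ := exists_isDualIdeal_isGLB husc hf hJ
    exact ⟨f K, ⟨K, hK, rfl⟩, by simpa only [hfJ] using hKglb⟩
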